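/- Let A = ⊕_{i=1}^{j} M_{a_i}(ℂ) ⊆ M_n(ℂ) and r = s v s as above. Then the algebra generated by A and r equals M_n(ℂ), and moreover M_n(ℂ) = A + A r A + A r² A + ⋯ + A r^{j-1} A. -/

import Mathlib

open Matrix

/-- with `A = ⊕ M_{a_i}(ℂ) ⊆ M_n(ℂ)` block-diagonal and `r = s v s` as
before, the algebra generated by `A` and `r` is all of `M_n(ℂ)`, and moreover
`M_n(ℂ) = A + A r A + A r² A + ⋯ + A r^{j-1} A` (as a linear span). -/
theorem stmt_10 (n j : ℕ) [NeZero n] [NeZero j]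
    (β : Fin n → Fin j) (hβ : Monotone β) (hβsurj : Function.Surjective β)
    (A : Set (Matrix (Fin n) (Fin n) ℂ))
    (hA : A = {x | ∀ p q : Fin n, β p ≠ β q → x p q = 0})
    (c : Fin j → Fin n) (hc : ∀ i, β (c i) = i)
    (s : Matrix (Fin n) (Fin n) ℂ)
    (hs : s = Matrix.diagonal (fun p : Fin n => if p ∈ Set.range c then (1 : ℂ) else 0))
    (σ : Equiv.Perm (Fin n)) (hσc : ∀ i : Fin j, σ (c i) = c (i + 1))
    (hσfix : ∀ p : Fin n, p ∉ Set.range c → σ p = p)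
    (v : Matrix (Fin n) (Fin n) ℂ)
    (hv : v = Matrix.of (fun p q : Fin n => if p = σ q then (1 : ℂ) else 0))
    (r : Matrix (Fin n) (Fin n) ℂ) (hr : r = s * v * s) :
    Algebra.adjoin ℂ (A ∪ {r}) = ⊤ ∧
      Submodule.span ℂ
        {x : Matrix (Fin n) (Fin n) ℂ |
          ∃ m : ℕ, m < j ∧ ∃ a ∈ A, ∃ b ∈ A, x = a * r ^ m * b} = ⊤ := by
  -- entries of r
  have hrapp : ∀ p q : Fin n, r p q =
      (if p ∈ Set.range c then (1:ℂ) else 0) * (if p = σ q then 1 else 0) *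
      (if q ∈ Set.range c then (1:ℂ) else 0) := by
    intro p q
    rw [hr, hs, hv]
    rw [Matrix.mul_diagonal, Matrix.diagonal_mul]
    rfl
  -- key step lemma
  have hrE : ∀ (i : Fin j) (q : Fin n),
      r * Matrix.single (c i) q 1 = Matrix.single (c (i + 1)) q 1 := by
    intro i q
    ext p' q'
    rw [Matrix.mul_apply]
    simp only [Matrix.single, Matrix.of_apply, mul_ite, mul_one, mul_zero]
    rw [Finset.sum_eq_single (c i)]
    · by_cases hq : q = q'
      · subst hq
        simp only [and_true, hrapp, hσc]
        by_cases hp : p' = c (i + 1)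
        · simp [hp, Set.mem_range]
        · simp [hp, Ne.symm hp]
      · simp [hq, fun h : c (i+1) = p' => hq]
    · intro k _ hk
      simp [Ne.symm hk]
    · intro h; exact absurd (Finset.mem_univ _) h
  -- power lemma
  open Fin.NatCast in
  have hpow : ∀ (m : ℕ) (i : Fin j) (q : Fin n),
      r ^ m * Matrix.single (c i) q 1 = Matrix.single (c (i + (m : Fin j))) q 1 := by
    intro m
    induction m with
    | zero => intro i q; simp
    | succ m ih =>
      intro i q
      rw [pow_succ, mul_assoc, hrE i q, ih (i + 1) q]
      congr 2
      push_cast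
      abel
  -- std basis matrices with matching blocks are in A
  have hEA : ∀ p q : Fin n, β p = β q → Matrix.single p q (1:ℂ) ∈ A := by
    intro p q h
    rw [hA]
    intro p' q' hne
    simp only [Matrix.single, Matrix.of_apply, ite_eq_right_iff]
    rintro ⟨rfl, rfl⟩
    exact absurd h hne
  set S : Set (Matrix (Fin n) (Fin n) ℂ) :=
    {x | ∃ m : ℕ, m < j ∧ ∃ a ∈ A, ∃ b ∈ A, x = a * r ^ m * b} with hS
  have hES : ∀ p q : Fin n, Matrix.single p q (1:ℂ) ∈ S := by
    intro p q
    refine ⟨(β p - β q).val, (β p - β q).isLt,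
      Matrix.single p (c (β p)) 1, hEA _ _ (by rw [hc]),
      Matrix.single (c (β q)) q 1, hEA _ _ (by rw [hc]), ?_⟩
    rw [mul_assoc, hpow, Fin.cast_val_eq_self]
    have : β q + (β p - β q) = β p := by abel
    rw [this, Matrix.single_mul_single_same, one_mul]
  have hspan : Submodule.span ℂ S = ⊤ := by
    rw [eq_top_iff]
    intro M _
    rw [Matrix.matrix_eq_sum_single M]
    apply Submodule.sum_mem
    intro p _
    apply Submodule.sum_mem
    intro q _
    have : Matrix.single p q (M p q) = M p q • Matrix.single p q (1:ℂ) := by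
      rw [Matrix.smul_single, smul_eq_mul, mul_one]
    rw [this]
    exact Submodule.smul_mem _ _ (Submodule.subset_span (hES p q))
  refine ⟨?_, hspan⟩
  have hSsub : S ⊆ (Algebra.adjoin ℂ (A ∪ {r}) : Set _) := by
    rintro x ⟨m, hm, a, ha, b, hb, rfl⟩
    have hr' : r ∈ Algebra.adjoin ℂ (A ∪ {r}) :=
      Algebra.subset_adjoin (Or.inr rfl)
    have ha' : a ∈ Algebra.adjoin ℂ (A ∪ {r}) := Algebra.subset_adjoin (Or.inl ha)
    have hb' : b ∈ Algebra.adjoin ℂ (A ∪ {r}) := Algebra.subset_adjoin (Or.inl hb)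
    exact mul_mem (mul_mem ha' (pow_mem hr' m)) hb'
  have hle : (⊤ : Submodule ℂ (Matrix (Fin n) (Fin n) ℂ)) ≤
      Subalgebra.toSubmodule (Algebra.adjoin ℂ (A ∪ {r})) :=
    hspan ▸ Submodule.span_le.mpr hSsub
  rw [eq_top_iff]
  intro x _
  exact hle Submodule.mem_top
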